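/- For every n ∈ ℕ, the n × n square {(a,b) ∈ ℤ² : 0 ≤ a < n and 0 ≤ b < n} is foldable with zero error: there exists a Turning Machine with n² monomers, initial positions pos(m_i)=(i,0) and suitable initial integer states, that computes a target configuration whose states are all 0 and whose set of monomer positions is exactly the n × n square. -/

import Mathlib

namespace TuringMachineFolding

/-- Points of the triangular grid, coordinatised by `ℤ × ℤ`. -/
abbrev Pt : Type := ℤ × ℤ

/-- The six triangular-grid unit vectors `x, y, w, -x, -y, -w`. -/
def unitVecs : Set Pt :=
  {((1 : ℤ), (0 : ℤ)), (0, 1), (-1, 1), (-1, 0), (0, -1), (1, -1)}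

/-- Anticlockwise rotation by `π/3`: the linear map with `ρ(1,0) = (0,1)`, `ρ(0,1) = (-1,1)`. -/
def rot : Pt → Pt := fun p => (-p.2, p.1 + p.2)

/-- Clockwise rotation by `π/3`, the inverse of `rot`. -/
def rotInv : Pt → Pt := fun p => (p.1 + p.2, -p.1)

/-- `rot` as a permutation of the grid, so that integer powers `rotE ^ t` make sense. -/
def rotE : Equiv.Perm Pt where
  toFun := rot
  invFun := rotInv
  left_inv := by
    rintro ⟨a, b⟩
    simp only [rot, rotInv, Prod.mk.injEq]
    constructor <;> ring
  right_inv := by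
    rintro ⟨a, b⟩
    simp only [rot, rotInv, Prod.mk.injEq]
    constructor <;> ring

/-- Scalar multiple of a grid vector. -/
def zsmulPt (m : ℤ) (p : Pt) : Pt := (m * p.1, m * p.2)

/-- A configuration of a Turning Machine of length `n`: states and positions of the monomers
`m_0, …, m_{n-1}` (indices `≥ n` carry irrelevant junk values), such that `pos m_0 = (0,0)`,
consecutive positions differ by one of the six unit vectors, and positions are pairwise
distinct. -/
structure Config (n : ℕ) where
  st : ℕ → ℤ
  pos : ℕ → Pt
  pos_zero : pos 0 = (0, 0)
  step_unit : ∀ i, i + 1 < n → pos (i + 1) - pos i ∈ unitVecs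
  pos_inj : ∀ i < n, ∀ j < n, pos i = pos j → i = j

/-- The direction of monomer `m_i` (meaningful for `i + 1 < n`). -/
def dir {n : ℕ} (c : Config n) (i : ℕ) : Pt := c.pos (i + 1) - c.pos i

/-- The translation vector applied to the head of `m_i` when the turning rule fires at `m_i`:
`ρ²(d_i)` for a positive state, `ρ⁻²(d_i)` for a negative state. -/
def delta {n : ℕ} (c : Config n) (i : ℕ) : Pt :=
  if 0 < c.st i then rot (rot (dir c i)) else rotInv (rotInv (dir c i))

/-- The state sequence after applying the turning rule at monomer `i`. -/
def nextSt {n : ℕ} (c : Config n) (i : ℕ) : ℕ → ℤ := fun j =>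
  if j = i then (if 0 < c.st i then c.st i - 1 else c.st i + 1) else c.st j

/-- The position sequence after applying the turning rule at monomer `i`. -/
def nextPos {n : ℕ} (c : Config n) (i : ℕ) : ℕ → Pt := fun j =>
  if i < j then c.pos j + delta c i else c.pos j

/-- The turning rule applied at monomer `i` transforms `c` into `c'`.  The requirement that
`c'` is again a `Config` (pairwise distinct positions) encodes that the move is not blocked. -/
def StepAt {n : ℕ} (c : Config n) (i : ℕ) (c' : Config n) : Prop :=
  i < n ∧ c.st i ≠ 0 ∧ (∀ j < n, c'.st j = nextSt c i j) ∧ (∀ j < n, c'.pos j = nextPos c i j)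

/-- The turning rule is applicable to monomer `i` in configuration `c`. -/
def Applicable {n : ℕ} (c : Config n) (i : ℕ) : Prop := ∃ c', StepAt c i c'

/-- Monomer `i` is blocked in `c`: nonzero state, but no applicable rule. -/
def Blocked {n : ℕ} (c : Config n) (i : ℕ) : Prop :=
  i < n ∧ c.st i ≠ 0 ∧ ¬ Applicable c i

/-- One asynchronous step of the machine. -/
def Step {n : ℕ} (c c' : Config n) : Prop := ∃ i, StepAt c i c'

/-- `c` is reachable from `c₀` by a finite sequence of rule applications. -/
def Reachable {n : ℕ} (c₀ c : Config n) : Prop := Relation.ReflTransGen Step c₀ c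

/-- No rule is applicable in `c`. -/
def Terminal {n : ℕ} (c : Config n) : Prop := ∀ i, ¬ Applicable c i

/-- `c` is permanently blocked: some state is nonzero but no monomer admits an applicable rule. -/
def PermBlocked {n : ℕ} (c : Config n) : Prop :=
  (∃ i < n, c.st i ≠ 0) ∧ Terminal c

/-- The Turning Machine with initial configuration `c₀` computes the target configuration `ct`:
every maximal sequence of rule applications from `c₀` is finite and ends in `ct`
(configurations are compared on the meaningful indices `< n`). -/
def Computes {n : ℕ} (c₀ ct : Config n) : Prop :=
  (¬ ∃ f : ℕ → Config n, f 0 = c₀ ∧ ∀ k, Step (f k) (f (k + 1))) ∧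
  ∀ c, Reachable c₀ c → Terminal c → ∀ i < n, c.st i = ct.st i ∧ c.pos i = ct.pos i

/-- The initial configuration with monomers on the x-axis, `pos m_i = (i,0)`, and
initial states `s₀`. -/
def mkInit (n : ℕ) (s₀ : ℕ → ℤ) : Config n where
  st := s₀
  pos := fun i => ((i : ℤ), 0)
  pos_zero := by simp
  step_unit := by
    intro i _
    have h : (((i + 1 : ℕ) : ℤ), (0 : ℤ)) - (((i : ℕ) : ℤ), (0 : ℤ)) = ((1 : ℤ), (0 : ℤ)) := by
      simp only [Prod.mk_sub_mk, Prod.mk.injEq]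
      constructor <;> push_cast <;> ring
    rw [h]
    simp [unitVecs]
  pos_inj := by
    intro i _ j _ h
    have h1 : ((i : ℕ) : ℤ) = ((j : ℕ) : ℤ) := congrArg Prod.fst h
    exact_mod_cast h1

/-- The initial configuration of the line-rotating Turning Machine `L^σ_n`:
`pos m_i = (i,0)`, states `σ` except the last monomer which has state `0`. -/
def lineInit (n : ℕ) (σ : ℤ) : Config n :=
  mkInit n (fun i => if i + 1 = n then 0 else σ)

/-- `Δs`: the number of rule applications made to monomer `i` on the way from `c₀` to `c`
(each application changes the state by one, towards `0`). -/
def dS {n : ℕ} (c₀ c : Config n) (i : ℕ) : ℤ := |c₀.st i - c.st i|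

/-- The set of positions occupied by a configuration. -/
def posSet {n : ℕ} (c : Config n) : Set Pt := {q | ∃ i < n, c.pos i = q}

/-- Adjacency on the triangular grid. -/
def Adj (p q : Pt) : Prop := q - p ∈ unitVecs

/-- The graph induced by the edge relation `E` on the set `S` is connected. -/
def ConnectedIn (E : Pt → Pt → Prop) (S : Set Pt) : Prop :=
  ∀ p ∈ S, ∀ q ∈ S, Relation.ReflTransGen (fun a b => a ∈ S ∧ b ∈ S ∧ E a b) p q

/-- A shape: a finite subset of the grid whose induced graph is connected. -/
def IsShape (S : Set Pt) : Prop := S.Finite ∧ ConnectedIn Adj S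

/-- `y`-monotone shape: the points of each row form a set of consecutive integers. -/
def YMonotone (S : Set Pt) : Prop :=
  ∀ j x₁ x₂ x₃ : ℤ, x₁ ≤ x₂ → x₂ ≤ x₃ → (x₁, j) ∈ S → (x₃, j) ∈ S → (x₂, j) ∈ S

/-- Adjacency along the `x` and `y` axes only. -/
def AdjXY (p q : Pt) : Prop :=
  q - p ∈ ({((1 : ℤ), (0 : ℤ)), (-1, 0), (0, 1), (0, -1)} : Set Pt)

/-- `xy`-connected: connected using only `±x` and `±y` edges. -/
def XYConnected (S : Set Pt) : Prop := ConnectedIn AdjXY S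

/-- The perimeter of a shape: its points having a neighbour outside the shape. -/
def perimeter (S : Set Pt) : Set Pt := {p ∈ S | ∃ v ∈ unitVecs, p + v ∉ S}

/-- Translation of a set of points. -/
def translate (t : Pt) (S : Set Pt) : Set Pt := (fun p => p + t) '' S

/-- The cardinality of the symmetric difference of two sets of points. -/
noncomputable def symmDiffCard (A B : Set Pt) : ℕ := ((A \ B) ∪ (B \ A)).ncard

/-- Error of a configuration w.r.t. a shape: the least cardinality, over all translations `t`,
of the symmetric difference of `S + t` and the set of monomer positions. -/
noncomputable def foldError {n : ℕ} (S : Set Pt) (c : Config n) : ℕ :=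
  sInf {m | ∃ t : Pt, symmDiffCard (translate t S) (posSet c) = m}

/-- The allowed steps of a `yw`-chain. -/
def ywSteps : Set Pt := {((0 : ℤ), (1 : ℤ)), (-1, 1)}

/-- `c 0, …, c (k-1)` is a `yw`-separator of the `y`-monotone shape `S`: a `yw`-chain inside `S`
from the bottommost row of `S` to the topmost row of `S`. -/
def IsYWSep (S : Set Pt) (k : ℕ) (c : ℕ → Pt) : Prop :=
  0 < k ∧ (∀ ℓ, ℓ + 1 < k → c (ℓ + 1) - c ℓ ∈ ywSteps) ∧ (∀ ℓ < k, c ℓ ∈ S) ∧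
    (∀ p ∈ S, (c 0).2 ≤ p.2) ∧ (∀ p ∈ S, p.2 ≤ (c (k - 1)).2)

/-- The shape `S` scaled by a factor `2`. -/
def scale2 (S : Set Pt) : Set Pt :=
  {q | ∃ p ∈ S, ∃ a b : ℤ, (a = 0 ∨ a = 1) ∧ (b = 0 ∨ b = 1) ∧ q = (2 * p.1 + a, 2 * p.2 + b)}

/-- The right boundary of a shape: the rightmost point of each nonempty row. -/
def rightBdry (S : Set Pt) : Set Pt := {p ∈ S | ∀ q ∈ S, q.2 = p.2 → q.1 ≤ p.1}

/-- The left boundary of a shape: the leftmost point of each nonempty row. -/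
def leftBdry (S : Set Pt) : Set Pt := {p ∈ S | ∀ q ∈ S, q.2 = p.2 → p.1 ≤ q.1}

/-- The "almost rectangle" `R_{k'}` from the definition of the `1`-gap spiral. -/
def spiralRing (k : ℤ) : Set Pt :=
  (({p : Pt | (p.2 = 2 * k ∨ p.2 = -(2 * k)) ∧ -(2 * k) ≤ p.1 ∧ p.1 ≤ 2 * k - 1} ∪
      {p : Pt | (p.1 = -(2 * k) ∨ p.1 = 2 * k - 1) ∧ -(2 * k) ≤ p.2 ∧ p.2 ≤ 2 * k}) ∪
      {(2 * k - 2, -(2 * k) + 2), (2 * k, -(2 * k)), (2 * k + 1, -(2 * k))}) \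
    {(2 * k - 1, -(2 * k) + 1)}

/-- The `k`-turn `1`-gap spiral `S_k`. -/
def spiral (k : ℕ) : Set Pt := ⋃ j ∈ Finset.Icc 1 k, spiralRing (j : ℤ)

/-- The base turning numbers `t_i` of the inside-to-outside sequence. -/
def tIn (t0 : ℤ) : ℕ → ℤ
  | 0 => t0
  | i + 1 => tIn t0 i + (if (i + 1) % 2 = 0 then 2 else 1)

/-- The inside-to-outside turning number sequence
`T_in(t₀) = [t₀]¹,[t₁]²,…,[t_{4k}]^{4k+1}, t_{4k}`. -/
def TInList (k : ℕ) (t0 : ℤ) : List ℤ :=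
  ((List.range (4 * k + 1)).flatMap fun i => List.replicate (i + 1) (tIn t0 i)) ++ [tIn t0 (4 * k)]

/-- The base turning numbers `t_i` of the outside-to-inside sequence. -/
def tOut (t0 : ℤ) : ℕ → ℤ
  | 0 => t0
  | i + 1 => tOut t0 i - (if (i + 1) % 2 = 0 then 1 else 2)

/-- The outside-to-inside turning number sequence
`T_out(t₀) = t₀,[t₀]^{4k+1},[t₁]^{4k},…,[t_{4k}]¹`. -/
def TOutList (k : ℕ) (t0 : ℤ) : List ℤ :=
  t0 :: ((List.range (4 * k + 1)).flatMap fun i => List.replicate (4 * k + 1 - i) (tOut t0 i))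

/-- The cross shape with arm length `a`. -/
def cross (a : ℤ) : Set Pt :=
  {p : Pt | p.2 = 0 ∧ -a ≤ p.1 ∧ p.1 ≤ a} ∪ {p : Pt | p.1 = 0 ∧ -a ≤ p.2 ∧ p.2 ≤ a}

/-- A positive zig-zag path: pairwise distinct points with steps in `{x, -x, y, w}`. -/
def PosZigZag (n : ℕ) (p : ℕ → Pt) : Prop :=
  (∀ i < n, ∀ j < n, p i = p j → i = j) ∧
    ∀ i, i + 1 < n → p (i + 1) - p i ∈ ({((1 : ℤ), (0 : ℤ)), (-1, 0), (0, 1), (-1, 1)} : Set Pt)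

/-- A negative zig-zag path: pairwise distinct points with steps in `{x, -x, -y, -w}`. -/
def NegZigZag (n : ℕ) (p : ℕ → Pt) : Prop :=
  (∀ i < n, ∀ j < n, p i = p j → i = j) ∧
    ∀ i, i + 1 < n → p (i + 1) - p i ∈ ({((1 : ℤ), (0 : ℤ)), (-1, 0), (0, -1), (1, -1)} : Set Pt)

/-!
A rule application at `m_i` replaces the single direction `d_i` by `ρ d_i` or `ρ⁻¹ d_i` (since
`d + ρ² d = ρ d`) and translates the rest of the chain rigidly. Hence a configuration reachable
from `c₀` is the walk with steps `ρ^(s₀ i - s i) (d⁰ i)` for a state vector `s` between `0` and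
`s₀`, and if all these walks are self-avoiding no rule is ever blocked: since `∑ |s i|` drops at
every step, every run ends, and it can only end with all states `0`.

For the square, block `q` of `n` monomers becomes column `q`: its first `n - 1` monomers get state
`1` (turning `x` into `y`) for even `q` and `-2` (turning `x` into `-w`, then `-y`) for odd `q`,
and its last monomer keeps the step `x` to the next column. Every intermediate step is `x`, `-w`
or the vertical step of its column, so a walk could only come back to a point along a run of
equal vertical steps, which is impossible.
-/

open Finset

lemma rot_rot_eq_sub (u : Pt) : rot (rot u) = rot u - u := by
  ext <;> simp only [rot, Prod.fst_sub, Prod.snd_sub] <;> ring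

lemma rotInv_rotInv_eq_sub (u : Pt) : rotInv (rotInv u) = rotInv u - u := by
  ext <;> simp only [rotInv, Prod.fst_sub, Prod.snd_sub] <;> ring

lemma rot_mem_unitVecs {v : Pt} (hv : v ∈ unitVecs) : rot v ∈ unitVecs := by
  simp only [unitVecs, Set.mem_insert_iff, Set.mem_singleton_iff] at hv ⊢
  rcases hv with rfl | rfl | rfl | rfl | rfl | rfl <;> simp [rot]

lemma rotInv_mem_unitVecs {v : Pt} (hv : v ∈ unitVecs) : rotInv v ∈ unitVecs := by
  simp only [unitVecs, Set.mem_insert_iff, Set.mem_singleton_iff] at hv ⊢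
  rcases hv with rfl | rfl | rfl | rfl | rfl | rfl <;> simp [rotInv]

lemma zpow_rotE_add_one (m : ℤ) (v : Pt) : (rotE ^ (m + 1)) v = rot ((rotE ^ m) v) := by
  rw [add_comm, zpow_one_add]; rfl

lemma zpow_rotE_sub_one (m : ℤ) (v : Pt) : (rotE ^ (m - 1)) v = rotInv ((rotE ^ m) v) := by
  rw [sub_eq_neg_add, zpow_add, zpow_neg_one]; rfl

lemma zpow_rotE_mem_unitVecs (m : ℤ) {v : Pt} (hv : v ∈ unitVecs) : (rotE ^ m) v ∈ unitVecs := by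
  induction m using Int.induction_on with
  | zero => simpa using hv
  | succ k ih => rw [zpow_rotE_add_one]; exact rot_mem_unitVecs ih
  | pred k ih => rw [zpow_rotE_sub_one]; exact rotInv_mem_unitVecs ih

section Turning

variable {n : ℕ}

def turnedWalk (c₀ : Config n) (t : ℕ → ℤ) (j : ℕ) : Pt :=
  ∑ k ∈ range j, (rotE ^ (c₀.st k - t k)) (dir c₀ k)

def TurnedFrom (c₀ c : Config n) : Prop :=
  (∀ i < n, c.st i ∈ Set.uIcc 0 (c₀.st i)) ∧ ∀ j < n, c.pos j = turnedWalk c₀ c.st j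

def SelfAvoidingTurns (c₀ : Config n) : Prop :=
  ∀ t : ℕ → ℤ, (∀ k < n, t k ∈ Set.uIcc 0 (c₀.st k)) → Set.InjOn (turnedWalk c₀ t) (Set.Iio n)

lemma turnedWalk_succ (c₀ : Config n) (t : ℕ → ℤ) (j : ℕ) :
    turnedWalk c₀ t (j + 1) = turnedWalk c₀ t j + (rotE ^ (c₀.st j - t j)) (dir c₀ j) :=
  sum_range_succ _ _

lemma turnedWalk_congr (c₀ : Config n) {t t' : ℕ → ℤ} {j : ℕ} (h : ∀ k < j, t k = t' k) :
    turnedWalk c₀ t j = turnedWalk c₀ t' j :=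
  sum_congr rfl fun k hk => by rw [h k (mem_range.1 hk)]

lemma turnedWalk_nextSt (c₀ c : Config n) (i j : ℕ) :
    turnedWalk c₀ (nextSt c i) j = turnedWalk c₀ c.st j +
      if i < j then (rotE ^ (c₀.st i - nextSt c i i)) (dir c₀ i) -
        (rotE ^ (c₀.st i - c.st i)) (dir c₀ i) else 0 := by
  have hterm : ∀ k, (rotE ^ (c₀.st k - nextSt c i k)) (dir c₀ k) =
      (rotE ^ (c₀.st k - c.st k)) (dir c₀ k) + if k = i then
        (rotE ^ (c₀.st i - nextSt c i i)) (dir c₀ i) - (rotE ^ (c₀.st i - c.st i)) (dir c₀ i)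
        else 0 := by
    intro k
    by_cases hk : k = i
    · subst hk; rw [if_pos rfl, add_sub_cancel]
    · simp [nextSt, hk]
  rw [turnedWalk, sum_congr rfl fun k _ => hterm k, sum_add_distrib, sum_ite_eq']
  simp only [turnedWalk, mem_range]

lemma turnedFrom_refl (c₀ : Config n) : TurnedFrom c₀ c₀ :=
  ⟨fun _ _ => Set.right_mem_uIcc, fun j _ => by
    simp only [turnedWalk, sub_self, zpow_zero, Equiv.Perm.one_apply, dir, sum_range_sub,
      c₀.pos_zero, Prod.mk_zero_zero, sub_zero]⟩

def walkConfig (c₀ : Config n) (t : ℕ → ℤ) (ht : Set.InjOn (turnedWalk c₀ t) (Set.Iio n)) :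
    Config n where
  st := t
  pos := turnedWalk c₀ t
  pos_zero := sum_range_zero _
  step_unit i hi := by
    rw [turnedWalk_succ, add_sub_cancel_left]
    exact zpow_rotE_mem_unitVecs _ (c₀.step_unit i hi)
  pos_inj _ hi _ hj hij := ht hi hj hij

namespace TurnedFrom

variable {c₀ c : Config n} {i : ℕ}

lemma dir_eq (h : TurnedFrom c₀ c) (hi : i + 1 < n) :
    dir c i = (rotE ^ (c₀.st i - c.st i)) (dir c₀ i) := by
  rw [dir, h.2 _ hi, h.2 _ (by omega), turnedWalk_succ, add_sub_cancel_left]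

lemma delta_eq (h : TurnedFrom c₀ c) (hi : i + 1 < n) :
    delta c i = (rotE ^ (c₀.st i - nextSt c i i)) (dir c₀ i) -
      (rotE ^ (c₀.st i - c.st i)) (dir c₀ i) := by
  rw [delta, h.dir_eq hi, nextSt, if_pos rfl]
  split_ifs
  · rw [show c₀.st i - (c.st i - 1) = c₀.st i - c.st i + 1 by ring, zpow_rotE_add_one,
      rot_rot_eq_sub]
  · rw [show c₀.st i - (c.st i + 1) = c₀.st i - c.st i - 1 by ring, zpow_rotE_sub_one,
      rotInv_rotInv_eq_sub]

lemma nextPos_eq (h : TurnedFrom c₀ c) (hi : i < n) {j : ℕ} (hj : j < n) :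
    nextPos c i j = turnedWalk c₀ (nextSt c i) j := by
  rw [turnedWalk_nextSt, ← h.2 j hj, nextPos]
  split_ifs with hij
  · rw [h.delta_eq (by omega)]
  · rw [add_zero]

lemma nextSt_mem_uIcc (h : TurnedFrom c₀ c) (hne : c.st i ≠ 0) {k : ℕ} (hk : k < n) :
    nextSt c i k ∈ Set.uIcc 0 (c₀.st k) := by
  have hc := h.1 k hk
  simp only [nextSt, Set.mem_uIcc] at hc ⊢
  split_ifs with hki <;> subst_vars <;> omega

lemma step {c' : Config n} (h : TurnedFrom c₀ c) (hs : Step c c') : TurnedFrom c₀ c' := by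
  obtain ⟨i, hi, hne, hst, hpos⟩ := hs
  refine ⟨fun k hk => hst k hk ▸ h.nextSt_mem_uIcc hne hk, fun j hj => ?_⟩
  rw [hpos j hj, h.nextPos_eq hi hj]
  exact turnedWalk_congr c₀ fun k hk => (hst k (by omega)).symm

lemma applicable (h : TurnedFrom c₀ c) (hsa : SelfAvoidingTurns c₀) (hi : i < n)
    (hne : c.st i ≠ 0) : Applicable c i :=
  ⟨walkConfig c₀ (nextSt c i) (hsa _ fun _ hk => h.nextSt_mem_uIcc hne hk), hi, hne,
    fun _ _ => rfl, fun _ hj => (h.nextPos_eq hi hj).symm⟩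

end TurnedFrom

lemma turnedFrom_of_reachable {c₀ c : Config n} (hc : Reachable c₀ c) : TurnedFrom c₀ c := by
  induction hc with
  | refl => exact turnedFrom_refl c₀
  | tail _ hs ih => exact ih.step hs

def totalState (c : Config n) : ℕ := ∑ i ∈ range n, (c.st i).natAbs

lemma Step.totalState_lt {c c' : Config n} (h : Step c c') : totalState c' < totalState c := by
  obtain ⟨i, hi, hne, hst, -⟩ := h
  have hle : ∀ j < n, (c'.st j).natAbs ≤ (c.st j).natAbs := by
    intro j hj
    rw [hst j hj, nextSt]
    by_cases hji : j = i
    · subst hji; rw [if_pos rfl]; split_ifs <;> omega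
    · rw [if_neg hji]
  refine sum_lt_sum (fun j hj => hle j (mem_range.1 hj)) ⟨i, mem_range.2 hi, ?_⟩
  rw [hst i hi, nextSt, if_pos rfl]
  split_ifs <;> omega

lemma not_exists_infinite_run : ¬ ∃ f : ℕ → Config n, ∀ k, Step (f k) (f (k + 1)) := by
  rintro ⟨f, hf⟩
  obtain ⟨k, hk⟩ := WellFounded.not_rel_apply_succ (r := (· < ·)) fun k => totalState (f k)
  exact hk (hf k).totalState_lt

theorem computes_walkConfig (c₀ : Config n) (hsa : SelfAvoidingTurns c₀) :
    Computes c₀ (walkConfig c₀ 0 (hsa 0 fun _ _ => Set.left_mem_uIcc)) := by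
  refine ⟨fun ⟨f, _, hf⟩ => not_exists_infinite_run ⟨f, hf⟩, fun c hc hterm i hi => ?_⟩
  have hturned := turnedFrom_of_reachable hc
  have hzero : ∀ k < n, c.st k = 0 := fun k hk =>
    by_contra fun hne => hterm k (hturned.applicable hsa hk hne)
  refine ⟨hzero i hi, ?_⟩
  rw [hturned.2 i hi]
  exact turnedWalk_congr c₀ fun k hk => hzero k (by omega)

end Turning

lemma div_eq_of_forall_mod_ne {n a b : ℕ} (h : ∀ k ∈ Ico a b, k % n ≠ n - 1) :
    ∀ k ∈ Ico a b, k / n = a / n := by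
  rcases n.eq_zero_or_pos with rfl | hn
  · simp
  intro k hk
  obtain ⟨hak, hkb⟩ := mem_Ico.1 hk
  by_contra hne
  have hlt : a / n < k / n := lt_of_le_of_ne (Nat.div_le_div_right hak) (Ne.symm hne)
  set m := n * (a / n) + (n - 1)
  have ham : a ≤ m := by have := Nat.div_add_mod a n; have := Nat.mod_lt a hn; omega
  have hmk : m < k := by
    have := Nat.div_add_mod k n
    have := Nat.mul_le_mul_left n (Nat.succ_le_of_lt hlt)
    rw [Nat.mul_succ] at this
    omega
  exact h m (mem_Ico.2 ⟨ham, by omega⟩) (by rw [Nat.mul_add_mod, Nat.mod_eq_of_lt (by omega)])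

lemma injOn_sum_range_of_right_or_vertical {n N : ℕ} (v : ℕ → Pt)
    (hv : ∀ k < N, (v k).1 = 1 ∨ k % n ≠ n - 1 ∧ v k = (0, (-1) ^ (k / n))) :
    Set.InjOn (fun j => ∑ k ∈ range j, v k) (Set.Iio N) := by
  intro a ha b hb hab
  wlog hlt : a < b generalizing a b
  · rcases lt_or_eq_of_le (not_lt.1 hlt) with h | h
    · exact (this hb ha hab.symm h).symm
    · exact h.symm
  exfalso
  have hsum : ∑ k ∈ Ico a b, v k = 0 := by
    rw [sum_Ico_eq_sub _ hlt.le]; exact sub_eq_zero.2 hab.symm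
  have hvert : ∀ k ∈ Ico a b, k % n ≠ n - 1 ∧ v k = (0, (-1) ^ (k / n)) := by
    have hN : ∀ k ∈ Ico a b, k < N := fun k hk => by
      have := mem_Ico.1 hk; simp only [Set.mem_Iio] at hb; omega
    have hfst : ∀ k ∈ Ico a b, (v k).1 = 0 := by
      refine (sum_eq_zero_iff_of_nonneg fun k hk => ?_).1 (by rw [← Prod.fst_sum, hsum]; rfl)
      rcases hv k (hN k hk) with h | h
      · rw [h]; exact zero_le_one
      · rw [h.2]
    intro k hk
    refine (hv k (hN k hk)).resolve_left fun h => ?_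
    have := hfst k hk
    omega
  have hsnd : ∑ k ∈ Ico a b, (v k).2 = 0 := by rw [← Prod.snd_sum, hsum]; rfl
  rw [sum_congr rfl fun k hk => by
      rw [(hvert k hk).2, div_eq_of_forall_mod_ne (fun k hk => (hvert k hk).1) k hk],
    sum_const, Nat.card_Ico, nsmul_eq_mul] at hsnd
  rcases neg_one_pow_eq_or ℤ (a / n) with h | h <;> simp only [h] at hsnd <;> omega

def squareInit (n i : ℕ) : ℤ := if i % n = n - 1 then 0 else if i / n % 2 = 0 then 1 else -2

lemma dir_mkInit (m : ℕ) (s : ℕ → ℤ) (k : ℕ) : dir (mkInit m s) k = (1, 0) := by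
  simp [dir, mkInit]

lemma squareStep_cases {n k : ℕ} {t : ℤ} (ht : t ∈ Set.uIcc 0 (squareInit n k)) :
    ((rotE ^ (squareInit n k - t)) (1, 0)).1 = 1 ∨
      k % n ≠ n - 1 ∧ (rotE ^ (squareInit n k - t)) (1, 0) = (0, (-1) ^ (k / n)) := by
  rw [Set.mem_uIcc] at ht
  unfold squareInit at ht ⊢
  split_ifs at ht ⊢ with hlast hpar
  · obtain rfl : t = 0 := by omega
    exact Or.inl rfl
  · rw [Even.neg_one_pow (Nat.even_iff.2 hpar)]
    obtain rfl | rfl : t = 0 ∨ t = 1 := by omega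
    · exact Or.inr ⟨hlast, rfl⟩
    · exact Or.inl rfl
  · rw [Odd.neg_one_pow (Nat.odd_iff.2 (by omega))]
    obtain rfl | rfl | rfl : t = 0 ∨ t = -1 ∨ t = -2 := by omega
    · exact Or.inr ⟨hlast, rfl⟩
    · exact Or.inl rfl
    · exact Or.inl rfl

lemma selfAvoidingTurns_square (n : ℕ) : SelfAvoidingTurns (mkInit (n * n) (squareInit n)) :=
  fun t ht => by
    unfold turnedWalk
    simp only [dir_mkInit]
    exact injOn_sum_range_of_right_or_vertical _ fun k hk => squareStep_cases (ht k hk)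

def boustrophedon (n j : ℕ) : Pt :=
  ((j / n : ℕ), (if j / n % 2 = 0 then j % n else n - 1 - j % n : ℕ))

lemma boustrophedon_succ_sub {n : ℕ} (hn : 0 < n) (j : ℕ) :
    boustrophedon n (j + 1) - boustrophedon n j = (rotE ^ squareInit n j) (1, 0) := by
  have hdm := Nat.div_add_mod j n
  have hmod := Nat.mod_lt j hn
  by_cases hlast : j % n = n - 1
  · have hj : j + 1 = n * (j / n + 1) := by rw [Nat.mul_succ]; omega
    have hdiv : (j + 1) / n = j / n + 1 := by rw [hj, Nat.mul_div_cancel_left _ hn]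
    have hmod' : (j + 1) % n = 0 := by rw [hj, Nat.mul_mod_right]
    simp only [boustrophedon, squareInit, hdiv, hmod', hlast, if_true]
    split_ifs <;> ext <;> simp <;> omega
  · have hlt : j % n + 1 < n := lt_of_le_of_ne hmod fun h => hlast (by omega)
    have hj : j + 1 = n * (j / n) + (j % n + 1) := by rw [← add_assoc, hdm]
    have hdiv : (j + 1) / n = j / n := by
      rw [hj, Nat.mul_add_div hn, Nat.div_eq_of_lt hlt, add_zero]
    have hmod' : (j + 1) % n = j % n + 1 := by rw [hj, Nat.mul_add_mod, Nat.mod_eq_of_lt hlt]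
    have hup : (rotE ^ (1 : ℤ)) ((1 : ℤ), (0 : ℤ)) = (0, 1) := by decide
    have hdown : (rotE ^ (-2 : ℤ)) ((1 : ℤ), (0 : ℤ)) = (0, -1) := by decide
    simp only [boustrophedon, squareInit, hdiv, hmod', hlast, if_false]
    split_ifs
    · rw [hup]; ext <;> simp
    · rw [hdown]; ext <;> simp; omega

lemma turnedWalk_square_zero {n : ℕ} (hn : 0 < n) (j : ℕ) :
    turnedWalk (mkInit (n * n) (squareInit n)) 0 j = boustrophedon n j := by
  have hstart : boustrophedon n 0 = 0 := by simp [boustrophedon]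
  rw [turnedWalk, ← sub_zero (boustrophedon n j), ← hstart, ← sum_range_sub]
  exact sum_congr rfl fun k _ => by
    rw [dir_mkInit, Pi.zero_apply, sub_zero, boustrophedon_succ_sub hn]; rfl

lemma exists_boustrophedon_eq_iff {n : ℕ} (hn : 0 < n) (q : Pt) :
    (∃ j < n * n, boustrophedon n j = q) ↔ 0 ≤ q.1 ∧ q.1 < n ∧ 0 ≤ q.2 ∧ q.2 < n := by
  obtain ⟨x, y⟩ := q
  constructor
  · rintro ⟨j, hj, hjq⟩
    have hx : j / n < n := (Nat.div_lt_iff_lt_mul hn).2 hj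
    have hy := Nat.mod_lt j hn
    simp only [boustrophedon, Prod.mk.injEq] at hjq
    obtain ⟨rfl, rfl⟩ := hjq
    generalize j / n = x at *
    generalize j % n = y at *
    split_ifs <;> omega
  · rintro ⟨hx0, hxn, hy0, hyn⟩
    lift x to ℕ using hx0
    lift y to ℕ using hy0
    obtain ⟨r, hrn, hry⟩ : ∃ r < n, (if x % 2 = 0 then r else n - 1 - r) = y :=
      ⟨if x % 2 = 0 then y else n - 1 - y, by split_ifs <;> omega, by split_ifs <;> omega⟩
    have hdiv : (n * x + r) / n = x := by
      rw [Nat.mul_add_div hn, Nat.div_eq_of_lt hrn, add_zero]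
    have hmod : (n * x + r) % n = r := by rw [Nat.mul_add_mod, Nat.mod_eq_of_lt hrn]
    refine ⟨n * x + r, by nlinarith, ?_⟩
    rw [boustrophedon, hdiv, hmod, hry]

/-- For every `n`, the `n × n` square is foldable with zero error: some
Turning Machine with `n²` monomers computes a target configuration with all states `0` whose
set of positions is exactly the `n × n` square. -/
theorem square_foldable (n : ℕ) :
    ∃ s₀ : ℕ → ℤ, ∃ ct : Config (n * n), Computes (mkInit (n * n) s₀) ct ∧
      (∀ i < n * n, ct.st i = 0) ∧
      posSet ct = {q : Pt | 0 ≤ q.1 ∧ q.1 < (n : ℤ) ∧ 0 ≤ q.2 ∧ q.2 < (n : ℤ)} := by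
  refine ⟨squareInit n, _, computes_walkConfig _ (selfAvoidingTurns_square n), fun _ _ => rfl, ?_⟩
  ext q
  rcases n.eq_zero_or_pos with rfl | hn
  · simp only [posSet, Set.mem_ofPred_eq]; omega
  · simp only [posSet, walkConfig, turnedWalk_square_zero hn, Set.mem_ofPred_eq]
    exact exists_boustrophedon_eq_iff hn q

end TuringMachineFolding
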